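/- Assume R is sufficiently large. Let d be a nonnegative integer and let e : R → ℤ be a function with e(α) ≥ 0 for all α ∈ R and Σ_{α∈R} e(α) = 2d. Then e is admissible of degree d (i.e., ∏_{α∈R} α^{e(α)} = q^d) if and only if ∏_{α∈R} (α²/q)^{e(α)} is a root of unity. -/

import Mathlib

/-!
Write `P = ∏ α ^ e α`. Since `∑ e α = 2d`, the product `∏ (α² / q) ^ e α` equals `(P / q ^ d) ^ 2`,
so one direction is immediate. Conversely, `q = α * (q / α)` lies in `Γ` together with `P`, hence so
does `P / q ^ d`; if its square is a root of unity then it is one itself, and it must be `1` because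
`R` is sufficiently large.
-/

open Finset

section GroupWithZero

variable {ι G₀ : Type*} [CommGroupWithZero G₀]

theorem Finset.prod_zpow_eq_zpow_sum₀ {a : G₀} (ha : a ≠ 0) (s : Finset ι) (f : ι → ℤ) :
    ∏ i ∈ s, a ^ f i = a ^ ∑ i ∈ s, f i := by
  classical
  induction s using Finset.induction with
  | empty => simp
  | insert i s hi ih => rw [prod_insert hi, sum_insert hi, zpow_add₀ ha, ih]

theorem prod_sq_div_zpow_eq_sq {s : Finset ι} (a : ι → G₀) {q : G₀} (hq : q ≠ 0) {e : ι → ℤ}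
    {d : ℤ} (hsum : ∑ i ∈ s, e i = 2 * d) :
    ∏ i ∈ s, (a i ^ 2 / q) ^ e i = ((∏ i ∈ s, a i ^ e i) / q ^ d) ^ 2 := by
  have hterm : ∀ i, (a i ^ 2 / q) ^ e i = (a i ^ e i) ^ 2 / q ^ e i := fun i => by
    rw [div_zpow, ← zpow_natCast, ← zpow_natCast, ← zpow_mul, ← zpow_mul, mul_comm]
  have hqd : q ^ (2 * d) = (q ^ d) ^ 2 := by rw [mul_comm, zpow_mul, zpow_ofNat]
  rw [prod_congr rfl fun i _ => hterm i, prod_div_distrib, prod_pow, prod_zpow_eq_zpow_sum₀ hq,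
    hsum, hqd, div_pow]

variable (R : Finset G₀)

theorem exists_mem_closure_val_eq_prod_zpow (hR0 : ∀ α ∈ R, α ≠ 0) (e : G₀ → ℤ) :
    ∃ u ∈ Subgroup.closure {y : G₀ˣ | (y : G₀) ∈ R}, (u : G₀) = ∏ α ∈ R, α ^ e α := by
  refine ⟨∏ α ∈ R.attach, Units.mk0 α.1 (hR0 α.1 α.2) ^ e α.1,
    Subgroup.prod_mem _ fun α _ => Subgroup.zpow_mem _ (Subgroup.subset_closure ?_) _, ?_⟩
  · simp [α.2]
  · simp only [Units.coe_prod, Units.val_zpow_eq_zpow_val, Units.val_mk0]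
    exact prod_attach R fun α => α ^ e α

theorem exists_mem_closure_val_eq_of_div_mem (hR0 : ∀ α ∈ R, α ≠ 0) {α q : G₀} (hα : α ∈ R)
    (hqα : q / α ∈ R) :
    ∃ u ∈ Subgroup.closure {y : G₀ˣ | (y : G₀) ∈ R}, (u : G₀) = q :=
  ⟨Units.mk0 α (hR0 α hα) * Units.mk0 (q / α) (hR0 _ hqα),
    Subgroup.mul_mem _ (Subgroup.subset_closure hα) (Subgroup.subset_closure hqα),
    by simp [mul_div_cancel₀ _ (hR0 α hα)]⟩

end GroupWithZero

theorem stmt_13_general (q : ℤ) (R : Finset ℂ) (hRne : R.Nonempty)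
    (hR0 : ∀ α ∈ R, α ≠ 0)
    (hconj : ∀ α ∈ R, (q : ℂ) / α ∈ R)
    (hlarge : ∀ x : ℂˣ, x ∈ Subgroup.closure {y : ℂˣ | (y : ℂ) ∈ R} →
      (∃ n : ℕ, 0 < n ∧ x ^ n = 1) → x = 1)
    (d : ℕ) (e : ℂ → ℤ)
    (hsum : ∑ α ∈ R, e α = 2 * (d : ℤ)) :
    (∏ α ∈ R, α ^ e α = (q : ℂ) ^ (d : ℤ)) ↔
      ∃ n : ℕ, 0 < n ∧ (∏ α ∈ R, (α ^ 2 / (q : ℂ)) ^ e α) ^ n = 1 := by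
  obtain ⟨α₀, hα₀⟩ := hRne
  have hq : (q : ℂ) ≠ 0 := (div_ne_zero_iff.1 (hR0 _ (hconj α₀ hα₀))).1
  rw [prod_sq_div_zpow_eq_sq (fun α => α) hq hsum]
  obtain ⟨u, hu, hu_val⟩ := exists_mem_closure_val_eq_prod_zpow R hR0 e
  obtain ⟨v, hv, hv_val⟩ := exists_mem_closure_val_eq_of_div_mem R hR0 hα₀ (hconj α₀ hα₀)
  have hx : ((u * v ^ (-(d : ℤ)) : ℂˣ) : ℂ) = (∏ α ∈ R, α ^ e α) / (q : ℂ) ^ (d : ℤ) := by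
    simp [hu_val, hv_val, div_eq_mul_inv]
  constructor
  · intro h
    exact ⟨1, one_pos, by rw [h, div_self (zpow_ne_zero _ hq), one_pow, one_pow]⟩
  · rintro ⟨n, hn, hroot⟩
    have hx1 : u * v ^ (-(d : ℤ)) = 1 :=
      hlarge _ (Subgroup.mul_mem _ hu (Subgroup.zpow_mem _ hv _))
        ⟨2 * n, by omega, Units.ext <| by rw [Units.val_pow_eq_pow_val, hx, pow_mul, hroot]; rfl⟩
    rw [← div_eq_one_iff_eq (zpow_ne_zero _ hq), ← hx, hx1, Units.val_one]

/-- Assume `R` is sufficiently large (the subgroup `Γ ≤ ℂˣ` generated by `R`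
contains no root of unity other than `1`). Let `d ≥ 0` and let `e : R → ℤ` be nonnegative with
`∑_{α∈R} e α = 2d`. Then `∏_{α∈R} α^{e α} = q^d` if and only if `∏_{α∈R} (α²/q)^{e α}` is a
root of unity. -/
theorem stmt_13 (q : ℤ) (hq : 2 ≤ q) (R : Finset ℂ) (hRne : R.Nonempty)
    (hR0 : ∀ α ∈ R, α ≠ 0)
    (habs : ∀ α ∈ R, ‖α‖ ^ 2 = (q : ℝ))
    (hconj : ∀ α ∈ R, (q : ℂ) / α ∈ R)
    (hlarge : ∀ x : ℂˣ, x ∈ Subgroup.closure {y : ℂˣ | (y : ℂ) ∈ R} →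
      (∃ n : ℕ, 0 < n ∧ x ^ n = 1) → x = 1)
    (d : ℕ) (e : ℂ → ℤ)
    (he0 : ∀ α ∈ R, 0 ≤ e α)
    (hsum : ∑ α ∈ R, e α = 2 * (d : ℤ)) :
    (∏ α ∈ R, α ^ e α = (q : ℂ) ^ (d : ℤ)) ↔
      ∃ n : ℕ, 0 < n ∧ (∏ α ∈ R, (α ^ 2 / (q : ℂ)) ^ e α) ^ n = 1 :=
  stmt_13_general q R hRne hR0 hconj hlarge d e hsum
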